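/- Let p : E ⥤ D be a functor, let ι : E ⥤ D ↓ p be the functor e ↦ (p e, e, 𝟙_{p e}), and let q : G ⥤ D be a cloven Grothendieck fibration. Let Fun_{/D}^{cart}(D ↓ p, G) denote the category whose objects are functors F : (D ↓ p) ⥤ G with F ⋙ q = π (strictly over D) sending π-cartesian morphisms to q-cartesian morphisms, and whose morphisms are natural transformations whose components lie over identities of D; let Fun_{/D}(E, G) be defined analogously (with no cartesianness condition). Then restriction along ι induces an equivalence of categories Fun_{/D}^{cart}(D ↓ p, G) ≃ Fun_{/D}(E, G). -/

import Mathlib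

open CategoryTheory CategoryTheory.Limits

/-- `φ` is a (strongly) cartesian morphism over `u : i ⟶ j` for the functor `q`. -/
def IsCart {E C : Type*} [Category E] [Category C] (q : E ⥤ C) {i j : C} (u : i ⟶ j)
    {z x : E} (φ : z ⟶ x) : Prop :=
  q.IsHomLift u φ ∧
    ∀ ⦃i' : C⦄ (v : i' ⟶ i) ⦃w : E⦄ (ψ : w ⟶ x), q.IsHomLift (v ≫ u) ψ →
      ∃! χ : w ⟶ z, q.IsHomLift v χ ∧ χ ≫ φ = ψ

variable {E D G : Type*} [Category E] [Category D] [Category G]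

/-- The canonical functor `ι : E ⥤ D ↓ p`, `e ↦ (p e, e, 𝟙 (p e))`. -/
def iota (p : E ⥤ D) : E ⥤ Comma (𝟭 D) p where
  obj e := { left := p.obj e, right := e, hom := 𝟙 (p.obj e) }
  map {e e'} f := { left := p.map f, right := f, w := by simp }

/-- An object of `Fun_{/D}^{cart}(D ↓ p, G)`: a functor `D ↓ p ⥤ G` lying strictly over
`D` and sending `π`-cartesian morphisms to `q`-cartesian morphisms. -/
structure CartFunOver (p : E ⥤ D) (q : G ⥤ D) where
  func : Comma (𝟭 D) p ⥤ G
  isOver : func ⋙ q = Comma.fst (𝟭 D) p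
  cart : ∀ {X Y : Comma (𝟭 D) p} (m : X ⟶ Y),
    IsCart (Comma.fst (𝟭 D) p) ((Comma.fst (𝟭 D) p).map m) m →
    IsCart q ((Comma.fst (𝟭 D) p).map m) (func.map m)

/-- Morphisms of `Fun_{/D}^{cart}(D ↓ p, G)`: natural transformations whose components
lie over identities of `D`. -/
instance CartFunOver.category (p : E ⥤ D) (q : G ⥤ D) : Category (CartFunOver p q) where
  Hom F G := {α : F.func ⟶ G.func //
    ∀ X : Comma (𝟭 D) p, q.IsHomLift (𝟙 X.left) (α.app X)}
  id F := ⟨𝟙 F.func, fun X => CategoryTheory.IsHomLift.id (Functor.congr_obj F.isOver X)⟩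
  comp {F G H} α β := ⟨α.1 ≫ β.1, fun X => by
    have := α.2 X
    have := β.2 X
    simp only [NatTrans.comp_app]
    infer_instance⟩
  id_comp α := by apply Subtype.ext; simp
  comp_id α := by apply Subtype.ext; simp
  assoc α β γ := by apply Subtype.ext; simp

/-- An object of `Fun_{/D}(E, G)`: a functor `E ⥤ G` lying strictly over `D`. -/
structure FunOver (p : E ⥤ D) (q : G ⥤ D) where
  func : E ⥤ G
  isOver : func ⋙ q = p

/-- Morphisms of `Fun_{/D}(E, G)`: natural transformations whose components lie over
identities of `D`. -/
instance FunOver.category (p : E ⥤ D) (q : G ⥤ D) : Category (FunOver p q) where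
  Hom F G := {α : F.func ⟶ G.func // ∀ e : E, q.IsHomLift (𝟙 (p.obj e)) (α.app e)}
  id F := ⟨𝟙 F.func, fun e => CategoryTheory.IsHomLift.id (Functor.congr_obj F.isOver e)⟩
  comp {F G H} α β := ⟨α.1 ≫ β.1, fun e => by
    have := α.2 e
    have := β.2 e
    simp only [NatTrans.comp_app]
    infer_instance⟩
  id_comp α := by apply Subtype.ext; simp
  comp_id α := by apply Subtype.ext; simp
  assoc α β γ := by apply Subtype.ext; simp

/-- Restriction along `ι : E ⥤ D ↓ p`. -/
def restrictIota (p : E ⥤ D) (q : G ⥤ D) : CartFunOver p q ⥤ FunOver p q where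
  obj F :=
    { func := iota p ⋙ F.func
      isOver := by
        have h : iota p ⋙ (F.func ⋙ q) = iota p ⋙ Comma.fst (𝟭 D) p := by
          rw [F.isOver]
        exact h }
  map {F G} α := ⟨Functor.whiskerLeft (iota p) α.1, fun e => α.2 ((iota p).obj e)⟩
  map_id F := by apply Subtype.ext; rfl
  map_comp α β := by apply Subtype.ext; rfl


/-!
Every object `X = (d, e, α : d ⟶ p e)` of `D ↓ p` has a `π`-cartesian morphism
`toIota X = (α, 𝟙 e) : X ⟶ ι e`, and the `π`-cartesian morphisms are exactly those whose
`E`-component is invertible. So a cartesian functor `F` on `D ↓ p` sends `toIota X` to a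
`q`-cartesian lift of `α` to `F (ι e)`: its transformations are determined by, and can be rebuilt
from, their components on the image of `ι`, through the universal property of `F (toIota X)`.
Conversely, a functor `F : E ⥤ G` over `D` extends cartesianly by sending `X` to the domain of a
chosen cartesian lift of `α` to `F e`; on `ι e` this lift lies over `𝟙 (p e)`, hence is invertible.
-/

section Cartesian

variable {C X : Type*} [Category C] [Category X] (q : X ⥤ C)

lemma isCart_iff_isStronglyCartesian {i j : C} (u : i ⟶ j) {z x : X} (φ : z ⟶ x) :
    IsCart q u φ ↔ q.IsStronglyCartesian u φ := by
  refine ⟨fun ⟨_, huniv⟩ => ⟨fun g φ' _ => huniv g φ' inferInstance⟩,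
    fun h => ⟨h.toIsHomLift, fun _ v _ ψ _ => ?_⟩⟩
  exact Functor.IsStronglyCartesian.universal_property q u φ v _ rfl ψ

lemma isFibered_of_exists_isCart
    (hfib : ∀ {i j : C} (u : i ⟶ j) (x : X), q.obj x = j →
      ∃ (z : X) (φ : z ⟶ x), IsCart q u φ) :
    q.IsFibered :=
  Functor.IsFibered.of_exists_isStronglyCartesian fun x _ u => by
    obtain ⟨z, φ, hφ⟩ := hfib u x rfl
    exact ⟨z, φ, (isCart_iff_isStronglyCartesian q u φ).1 hφ⟩

lemma isHomLift_map_of_comp_eq {Y : Type*} [Category Y] {P : Y ⥤ C} {F : Y ⥤ X}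
    (h : F ⋙ q = P) {y y' : Y} (f : y ⟶ y') : q.IsHomLift (P.map f) (F.map f) := by
  subst h
  exact IsHomLift.map q (F.map f)

end Cartesian

section CommaFst

variable {p : E ⥤ D}

lemma isStronglyCartesian_fst_of_isIso_right {X Y : Comma (𝟭 D) p} (m : X ⟶ Y)
    [IsIso m.right] : (Comma.fst (𝟭 D) p).IsStronglyCartesian m.left m where
  toIsHomLift := IsHomLift.map (Comma.fst (𝟭 D) p) m
  universal_property' {W} g ψ _ := by
    have hψ : ψ.left = g ≫ m.left :=
      (IsHomLift.eq_of_isHomLift (Comma.fst (𝟭 D) p) _ ψ).symm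
    refine ⟨⟨g, ψ.right ≫ inv m.right, ?_⟩,
      ⟨IsHomLift.map (Comma.fst (𝟭 D) p) (⟨g, _, _⟩ : W ⟶ X), ?_⟩, ?_⟩
    · have hw := ψ.w
      simp only [Functor.id_obj, Functor.id_map, hψ] at hw ⊢
      rw [Functor.map_comp, Functor.map_inv, ← Category.assoc, IsIso.eq_comp_inv, Category.assoc,
        ← m.w]
      simpa [hψ] using hw
    · ext
      · simp [hψ]
      · simp
    · rintro χ ⟨_, rfl⟩
      ext
      · exact (IsHomLift.eq_of_isHomLift (Comma.fst (𝟭 D) p) g χ).symm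
      · simp

/- `m` and `m₀ : (X.left, Y.right, m.left ≫ Y.hom) ⟶ Y` are both cartesian over `m.left`, so
`m = Φ ≫ m₀` for an isomorphism `Φ`, and `m.right = Φ.right`. -/
lemma isIso_right_of_isStronglyCartesian_fst {X Y : Comma (𝟭 D) p} (m : X ⟶ Y)
    [(Comma.fst (𝟭 D) p).IsStronglyCartesian m.left m] : IsIso m.right := by
  let X₀ : Comma (𝟭 D) p := { left := X.left, right := Y.right, hom := m.left ≫ Y.hom }
  let m₀ : X₀ ⟶ Y := { left := m.left, right := 𝟙 Y.right, w := by simp [X₀] }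
  have := isStronglyCartesian_fst_of_isIso_right m₀
  let Φ := Functor.IsCartesian.domainUniqueUpToIso (Comma.fst (𝟭 D) p) m.left m₀ m
  have hm : m.right = Φ.hom.right := by
    have h := congrArg CommaMorphism.right
      (Functor.IsCartesian.fac (Comma.fst (𝟭 D) p) m.left m₀ m)
    rw [Comma.comp_right, Category.comp_id] at h
    exact h.symm
  rw [hm]
  exact (Comma.snd (𝟭 D) p).map_isIso Φ.hom

end CommaFst

section ToIota

variable (p : E ⥤ D)

@[simp] lemma iota_obj_left (e : E) : ((iota p).obj e).left = p.obj e := rfl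

@[simp] lemma iota_obj_right (e : E) : ((iota p).obj e).right = e := rfl

@[simp] lemma iota_obj_hom (e : E) : ((iota p).obj e).hom = 𝟙 (p.obj e) := rfl

@[simp] lemma iota_map_left {e e' : E} (f : e ⟶ e') : ((iota p).map f).left = p.map f := rfl

@[simp] lemma iota_map_right {e e' : E} (f : e ⟶ e') : ((iota p).map f).right = f := rfl

@[simps]
def toIota (X : Comma (𝟭 D) p) : X ⟶ (iota p).obj X.right where
  left := X.hom
  right := 𝟙 X.right
  w := by simp

instance isStronglyCartesian_fst_toIota (X : Comma (𝟭 D) p) :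
    (Comma.fst (𝟭 D) p).IsStronglyCartesian X.hom (toIota p X) :=
  have : IsIso (toIota p X).right := inferInstanceAs (IsIso (𝟙 X.right))
  isStronglyCartesian_fst_of_isIso_right (toIota p X)

lemma toIota_naturality {X Y : Comma (𝟭 D) p} (m : X ⟶ Y) :
    m ≫ toIota p Y = toIota p X ≫ (iota p).map m.right := by
  ext
  · simpa using m.w
  · simp

@[simp]
lemma toIota_iota (e : E) : toIota p ((iota p).obj e) = 𝟙 ((iota p).obj e) := by
  ext <;> simp

end ToIota

namespace FunOver

variable {p : E ⥤ D} {q : G ⥤ D}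

instance isHomLift_map (F : FunOver p q) {e e' : E} (f : e ⟶ e') :
    q.IsHomLift (p.map f) (F.func.map f) :=
  isHomLift_map_of_comp_eq q F.isOver f

@[ext]
lemma hom_ext {F F' : FunOver p q} {α β : F ⟶ F'} (h : ∀ e, α.1.app e = β.1.app e) :
    α = β :=
  Subtype.ext (NatTrans.ext (funext h))

def isoMk {F F' : FunOver p q} (α : F.func ≅ F'.func)
    (hα : ∀ e, q.IsHomLift (𝟙 (p.obj e)) (α.hom.app e)) : F ≅ F' where
  hom := ⟨α.hom, hα⟩
  inv := ⟨α.inv, fun e => by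
    have : q.IsHomLift (𝟙 (p.obj e)) (α.app e).hom := hα e
    exact IsHomLift.lift_id_inv q (p.obj e) (α.app e)⟩
  hom_inv_id := Subtype.ext α.hom_inv_id
  inv_hom_id := Subtype.ext α.inv_hom_id

end FunOver

namespace CartFunOver

variable {p : E ⥤ D} {q : G ⥤ D}

instance isHomLift_map (F : CartFunOver p q) {X Y : Comma (𝟭 D) p} (m : X ⟶ Y) :
    q.IsHomLift m.left (F.func.map m) :=
  isHomLift_map_of_comp_eq q F.isOver m

instance isHomLift_app {F F' : CartFunOver p q} (α : F ⟶ F') (X : Comma (𝟭 D) p) :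
    q.IsHomLift (𝟙 X.left) (α.1.app X) :=
  α.2 X

lemma isStronglyCartesian_map (F : CartFunOver p q) {X Y : Comma (𝟭 D) p} (m : X ⟶ Y)
    (hm : (Comma.fst (𝟭 D) p).IsStronglyCartesian m.left m) :
    q.IsStronglyCartesian m.left (F.func.map m) :=
  (isCart_iff_isStronglyCartesian q _ _).1
    (F.cart m ((isCart_iff_isStronglyCartesian _ _ _).2 hm))

instance isStronglyCartesian_map_toIota (F : CartFunOver p q) (X : Comma (𝟭 D) p) :
    q.IsStronglyCartesian X.hom (F.func.map (toIota p X)) :=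
  F.isStronglyCartesian_map (toIota p X) (isStronglyCartesian_fst_toIota p X)

lemma hom_ext_of_iota {F F' : CartFunOver p q} {α β : F ⟶ F'}
    (h : ∀ e, α.1.app ((iota p).obj e) = β.1.app ((iota p).obj e)) : α = β := by
  refine Subtype.ext (NatTrans.ext (funext fun X => ?_))
  apply Functor.IsStronglyCartesian.ext q X.hom (F'.func.map (toIota p X)) (𝟙 X.left)
  rw [← α.1.naturality, ← β.1.naturality, h]

section ExtendApp

variable {F F' : CartFunOver p q}
  (γ : ∀ e : E, F.func.obj ((iota p).obj e) ⟶ F'.func.obj ((iota p).obj e))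
  [hγ : ∀ e, q.IsHomLift (𝟙 (p.obj e)) (γ e)]

noncomputable def extendApp (X : Comma (𝟭 D) p) : F.func.obj X ⟶ F'.func.obj X :=
  Functor.IsStronglyCartesian.map q X.hom (F'.func.map (toIota p X))
    (Category.id_comp X.hom).symm (F.func.map (toIota p X) ≫ γ X.right)

instance isHomLift_extendApp (X : Comma (𝟭 D) p) : q.IsHomLift (𝟙 X.left) (extendApp γ X) :=
  Functor.IsStronglyCartesian.map_isHomLift _ _ _ _ _

lemma extendApp_comp_map_toIota (X : Comma (𝟭 D) p) :
    extendApp γ X ≫ F'.func.map (toIota p X) = F.func.map (toIota p X) ≫ γ X.right :=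
  Functor.IsStronglyCartesian.fac _ _ _ _ _

lemma extendApp_iota (e : E) : extendApp γ ((iota p).obj e) = γ e := by
  have : q.IsHomLift (𝟙 ((𝟭 D).obj ((iota p).obj e).left)) (γ e) :=
    inferInstanceAs (q.IsHomLift (𝟙 (p.obj e)) (γ e))
  symm
  apply Functor.IsStronglyCartesian.map_uniq
  simp

lemma extendApp_naturality
    (hnat : ∀ ⦃e e' : E⦄ (f : e ⟶ e'),
      F.func.map ((iota p).map f) ≫ γ e' = γ e ≫ F'.func.map ((iota p).map f))
    {X Y : Comma (𝟭 D) p} (m : X ⟶ Y) :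
    F.func.map m ≫ extendApp γ Y = extendApp γ X ≫ F'.func.map m := by
  have : q.IsHomLift m.left (F.func.map m ≫ extendApp γ Y) := inferInstance
  apply Functor.IsStronglyCartesian.ext q Y.hom (F'.func.map (toIota p Y)) m.left
  rw [Category.assoc, Category.assoc, extendApp_comp_map_toIota, ← Functor.map_comp,
    toIota_naturality, Functor.map_comp, ← Category.assoc (extendApp γ X),
    extendApp_comp_map_toIota, Category.assoc, ← hnat,
    ← Functor.map_comp_assoc, ← Functor.map_comp_assoc, toIota_naturality]

end ExtendApp

noncomputable def homOfRestrict {F F' : CartFunOver p q}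
    (γ : (restrictIota p q).obj F ⟶ (restrictIota p q).obj F') : F ⟶ F' :=
  ⟨{ app := extendApp (fun e => γ.1.app e) (hγ := γ.2)
     naturality := fun _ _ m =>
       extendApp_naturality _ (hγ := γ.2) (fun _ _ f => γ.1.naturality f) m },
    fun X => isHomLift_extendApp _ (hγ := γ.2) X⟩

lemma restrictIota_map_homOfRestrict {F F' : CartFunOver p q}
    (γ : (restrictIota p q).obj F ⟶ (restrictIota p q).obj F') :
    (restrictIota p q).map (homOfRestrict γ) = γ := by
  ext e
  exact extendApp_iota (fun e => γ.1.app e) (hγ := γ.2) e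

end CartFunOver

namespace FunOver

variable {p : E ⥤ D} {q : G ⥤ D} [q.IsFibered] (F : FunOver p q)

noncomputable def extensionObj (X : Comma (𝟭 D) p) : G :=
  Functor.IsPreFibered.pullbackObj (p := q) (Functor.congr_obj F.isOver X.right) X.hom

lemma extensionObj_proj (X : Comma (𝟭 D) p) : q.obj (F.extensionObj X) = X.left :=
  Functor.IsPreFibered.pullbackObj_proj _ _

noncomputable def extensionπ (X : Comma (𝟭 D) p) : F.extensionObj X ⟶ F.func.obj X.right :=
  Functor.IsPreFibered.pullbackMap (p := q) (Functor.congr_obj F.isOver X.right) X.hom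

instance isStronglyCartesian_extensionπ (X : Comma (𝟭 D) p) :
    q.IsStronglyCartesian X.hom (F.extensionπ X) :=
  have : q.IsCartesian X.hom (F.extensionπ X) :=
    Functor.IsPreFibered.pullbackMap.IsCartesian _ _
  inferInstance

noncomputable def extensionMap {X Y : Comma (𝟭 D) p} (m : X ⟶ Y) :
    F.extensionObj X ⟶ F.extensionObj Y :=
  Functor.IsStronglyCartesian.map q Y.hom (F.extensionπ Y) (g := m.left) m.w.symm
    (F.extensionπ X ≫ F.func.map m.right)

instance isHomLift_extensionMap {X Y : Comma (𝟭 D) p} (m : X ⟶ Y) :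
    q.IsHomLift m.left (F.extensionMap m) :=
  Functor.IsStronglyCartesian.map_isHomLift _ _ _ _ _

lemma extensionMap_comp_extensionπ {X Y : Comma (𝟭 D) p} (m : X ⟶ Y) :
    F.extensionMap m ≫ F.extensionπ Y = F.extensionπ X ≫ F.func.map m.right :=
  Functor.IsStronglyCartesian.fac _ _ _ _ _

noncomputable def extensionFunctor : Comma (𝟭 D) p ⥤ G where
  obj := F.extensionObj
  map := F.extensionMap
  map_id X := by
    have : q.IsHomLift (CommaMorphism.left (𝟙 X)) (𝟙 (F.extensionObj X)) :=
      IsHomLift.id (F.extensionObj_proj X)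
    symm
    apply Functor.IsStronglyCartesian.map_uniq
    simp
  map_comp m m' := by
    have : q.IsHomLift (m ≫ m').left (F.extensionMap m ≫ F.extensionMap m') :=
      IsHomLift.comp q m.left m'.left _ _
    symm
    apply Functor.IsStronglyCartesian.map_uniq
    rw [Category.assoc, extensionMap_comp_extensionπ, ← Category.assoc,
      extensionMap_comp_extensionπ, Category.assoc, Comma.comp_right, Functor.map_comp]

lemma extensionFunctor_comp : F.extensionFunctor ⋙ q = Comma.fst (𝟭 D) p :=
  CategoryTheory.Functor.ext F.extensionObj_proj
    (fun _ _ m => IsHomLift.fac' q m.left (F.extensionMap m))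

lemma isStronglyCartesian_extensionMap {X Y : Comma (𝟭 D) p} (m : X ⟶ Y)
    (hm : (Comma.fst (𝟭 D) p).IsStronglyCartesian m.left m) :
    q.IsStronglyCartesian m.left (F.extensionMap m) := by
  have := isIso_right_of_isStronglyCartesian_fst m
  have hw : m.left ≫ Y.hom = X.hom ≫ p.map m.right := m.w
  have : q.IsStronglyCartesian (m.left ≫ Y.hom) (F.extensionMap m ≫ F.extensionπ Y) := by
    rw [extensionMap_comp_extensionπ, hw]
    infer_instance
  exact Functor.IsStronglyCartesian.of_comp q (g := Y.hom) (ψ := F.extensionπ Y)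

noncomputable def extension : CartFunOver p q where
  func := F.extensionFunctor
  isOver := F.extensionFunctor_comp
  cart m hm := by
    rw [isCart_iff_isStronglyCartesian] at hm ⊢
    exact F.isStronglyCartesian_extensionMap m hm

instance isIso_extensionπ_iota (e : E) : IsIso (F.extensionπ ((iota p).obj e)) :=
  have : IsIso ((iota p).obj e).hom := inferInstanceAs (IsIso (𝟙 (p.obj e)))
  Functor.IsStronglyCartesian.isIso_of_base_isIso q ((iota p).obj e).hom _

noncomputable def restrictIotaExtensionIso : (restrictIota p q).obj F.extension ≅ F :=
  -- `(_ :)` elaborates `asIso` against its own type, where the `IsIso` instance is found.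
  isoMk (NatIso.ofComponents (fun e => (asIso (F.extensionπ ((iota p).obj e)) :))
      fun f => F.extensionMap_comp_extensionπ ((iota p).map f))
    fun e => (inferInstance : q.IsHomLift ((iota p).obj e).hom (F.extensionπ ((iota p).obj e)))

end FunOver

/-- **The comma category is the free fibration on `p : E ⥤ D`.**
If `q : G ⥤ D` is a (cloven) Grothendieck fibration, restriction along
`ι : E ⥤ D ↓ p` is an equivalence between the category of cartesian functors
`D ↓ p ⥤ G` over `D` and the category of all functors `E ⥤ G` over `D`. -/
theorem restrictIota_isEquivalence (p : E ⥤ D) (q : G ⥤ D)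
    (hfib : ∀ {i j : D} (u : i ⟶ j) (x : G), q.obj x = j →
      ∃ (z : G) (φ : z ⟶ x), IsCart q u φ) :
    (restrictIota p q).IsEquivalence := by
  have := isFibered_of_exists_isCart q hfib
  have : (restrictIota p q).Faithful :=
    ⟨fun h => CartFunOver.hom_ext_of_iota fun e => congrArg (fun γ => γ.1.app e) h⟩
  have : (restrictIota p q).Full :=
    ⟨fun γ => ⟨_, CartFunOver.restrictIota_map_homOfRestrict γ⟩⟩
  have : (restrictIota p q).EssSurj :=
    ⟨fun F => ⟨F.extension, ⟨F.restrictIotaExtensionIso⟩⟩⟩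
  exact { }
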